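/- For n ≥ 1, x·det((C(2i+1, i-j)·x² + C(2i+3, i+1-j))_{i,j=0}^{n-1}) = L_{2n+1}(x). -/

import Mathlib

/-- Generalized binomial coefficient `C(a,b)` for integer `a`, with `C(a,b) = 0` for `b < 0`. -/
noncomputable def gchoose (a b : ℤ) : ℤ :=
  if 0 ≤ b then Ring.choose a b.toNat else 0

/-- Fibonacci polynomials `F_m(x) = ∑_{k=0}^{⌊m/2⌋} C(m-k,k) x^{m-2k}`. -/
noncomputable def fibP (m : ℕ) (x : ℝ) : ℝ :=
  ∑ k ∈ Finset.range (m / 2 + 1), (Nat.choose (m - k) k : ℝ) * x ^ (m - 2 * k)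

/-- Lucas polynomials `L_m(x) = ∑_{k=0}^{⌊m/2⌋} (m/(m-k)) C(m-k,k) x^{m-2k}`, `L_0 = 2`. -/
noncomputable def lucasP (m : ℕ) (x : ℝ) : ℝ :=
  if m = 0 then 2
  else ∑ k ∈ Finset.range (m / 2 + 1),
    ((m : ℝ) / ((m - k : ℕ) : ℝ)) * (Nat.choose (m - k) k : ℝ) * x ^ (m - 2 * k)

/-!
Write `M` for the matrix. Pascal's rule applied twice gives
`C(2i+3, i+1-j) = C(2i+1, i-j-1) + 2 C(2i+1, i-j) + C(2i+1, i-j+1)`, so `M = P T` with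
`P = (C(2i+1, i-j))` lower unitriangular and `T` tridiagonal with `x² + 2` on the diagonal and `1`
beside it, except `T₀₀ = x² + 3`, which comes from the symmetry `C(2i+1, i+1) = C(2i+1, i)`.
Expanding `det T` along its last row gives `Dₙ₊₂ = (x² + 2) Dₙ₊₁ - Dₙ`, which is also the recurrence
of `L₂ₙ₊₁` obtained from `Lₘ₊₂ = x Lₘ₊₁ + Lₘ`, and the initial values agree. The Lucas recurrence is
read off the explicit formula through `Lₘ₊₂ = Fₘ₊₂ + Fₘ` and the Fibonacci recurrence.
-/

open Finset

theorem gchoose_of_neg (a : ℤ) {b : ℤ} (hb : b < 0) : gchoose a b = 0 := by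
  simp [gchoose, not_le.mpr hb]

theorem gchoose_zero_right (a : ℤ) : gchoose a 0 = 1 := by
  simp [gchoose]

theorem gchoose_natCast (m : ℕ) {b : ℤ} (hb : 0 ≤ b) : gchoose m b = m.choose b.toNat := by
  simp [gchoose, hb, Ring.choose_natCast]

theorem gchoose_succ_succ (a b : ℤ) :
    gchoose (a + 1) (b + 1) = gchoose a b + gchoose a (b + 1) := by
  rcases lt_trichotomy b (-1) with hb | rfl | hb
  · rw [gchoose_of_neg _ (by omega : b + 1 < 0), gchoose_of_neg _ (by omega : b + 1 < 0),
      gchoose_of_neg _ (hb.trans (by norm_num)), add_zero]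
  · simp [gchoose_of_neg, gchoose_zero_right]
  · have hb1 : (b + 1).toNat = b.toNat + 1 := by omega
    simp [gchoose, show 0 ≤ b by omega, show 0 ≤ b + 1 by omega, hb1, Ring.choose_succ_succ]

theorem gchoose_add_two_succ (a b : ℤ) :
    gchoose (a + 2) (b + 1) = gchoose a (b - 1) + 2 * gchoose a b + gchoose a (b + 1) := by
  have h := gchoose_succ_succ a (b - 1)
  rw [sub_add_cancel] at h
  rw [show a + 2 = a + 1 + 1 by ring, gchoose_succ_succ, gchoose_succ_succ a b, h]
  ring

theorem gchoose_two_mul_add_one_succ (a : ℕ) :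
    gchoose (2 * a + 1) (a + 1) = gchoose (2 * a + 1) a := by
  rw [show 2 * (a : ℤ) + 1 = (2 * a + 1 : ℕ) by push_cast; ring,
    gchoose_natCast _ (by positivity), gchoose_natCast _ (by positivity)]
  simp [show ((a : ℤ) + 1).toNat = a + 1 by omega, Nat.choose_symm_half]

section LeadingSubmatrix

variable {R : Type*}

def leadingSubmatrix (f : ℕ → ℕ → R) (n : ℕ) : Matrix (Fin n) (Fin n) R :=
  Matrix.of fun i j => f i j

@[simp]
theorem leadingSubmatrix_apply (f : ℕ → ℕ → R) {n : ℕ} (i j : Fin n) :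
    leadingSubmatrix f n i j = f i j :=
  rfl

theorem leadingSubmatrix_submatrix_castSucc (f : ℕ → ℕ → R) (n : ℕ) :
    (leadingSubmatrix f (n + 1)).submatrix Fin.castSucc Fin.castSucc = leadingSubmatrix f n :=
  rfl

theorem det_leadingSubmatrix_add_two [CommRing R] {f : ℕ → ℕ → R}
    (hlow : ∀ i j, j + 1 < i → f i j = 0) (hup : ∀ i j, i + 1 < j → f i j = 0) (n : ℕ) :
    (leadingSubmatrix f (n + 2)).det =
      f (n + 1) (n + 1) * (leadingSubmatrix f (n + 1)).det -
        f (n + 1) n * f n (n + 1) * (leadingSubmatrix f n).det := by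
  have hcofactor : ((leadingSubmatrix f (n + 2)).submatrix (Fin.last (n + 1)).succAbove
      (Fin.last n).castSucc.succAbove).det = f n (n + 1) * (leadingSubmatrix f n).det := by
    have hminor : ((leadingSubmatrix f (n + 2)).submatrix (Fin.last (n + 1)).succAbove
        (Fin.last n).castSucc.succAbove).submatrix (Fin.last n).succAbove (Fin.last n).succAbove =
        leadingSubmatrix f n := by
      ext i j
      simp [Fin.succAbove_castSucc_of_lt _ _ (Fin.castSucc_lt_last j)]
    rw [Matrix.det_succ_column _ (Fin.last n), Fin.sum_univ_castSucc,
      sum_eq_zero fun i _ => by simp [hup i (n + 1) (by omega)], hminor]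
    simp
  rw [Matrix.det_succ_row _ (Fin.last (n + 1)), Fin.sum_univ_castSucc, Fin.sum_univ_castSucc,
    sum_eq_zero fun i _ => by simp [hlow (n + 1) i (by omega)], hcofactor]
  simp [leadingSubmatrix_submatrix_castSucc]
  ring

end LeadingSubmatrix

noncomputable def oddPascal (i j : ℕ) : ℤ :=
  gchoose (2 * i + 1) (i - j)

theorem oddPascal_of_lt {i j : ℕ} (h : i < j) : oddPascal i j = 0 :=
  gchoose_of_neg _ (by omega)

theorem oddPascal_self (i : ℕ) : oddPascal i i = 1 := by
  simp [oddPascal, gchoose_zero_right]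

theorem oddPascal_sub_one (i j : ℕ) :
    oddPascal i (j - 1) = gchoose (2 * i + 1) (i - j + 1) := by
  rcases j with _ | j
  · simp [oddPascal, gchoose_two_mul_add_one_succ]
  · simp only [oddPascal, Nat.add_sub_cancel]
    push_cast
    ring_nf

section Factorization

variable {R : Type*} [CommRing R]

theorem det_oddPascal (n : ℕ) : (leadingSubmatrix (fun i j => (oddPascal i j : R)) n).det = 1 := by
  have h : (leadingSubmatrix (fun i j => (oddPascal i j : R)) n).IsLowerTriangular :=
    fun i j hij => by simp [oddPascal_of_lt (show (i : ℕ) < j from hij)]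
  simp [Matrix.det_of_isLowerTriangular _ h, oddPascal_self]

-- `j - 1` truncates at `0`, which puts the extra `1` on the `(0, 0)` entry.
def lucasTridiag (x : R) (i j : ℕ) : R :=
  (if i = j then x ^ 2 + 2 else 0) + (if i = j - 1 then 1 else 0) + (if i = j + 1 then 1 else 0)

theorem oddPascal_mul_lucasTridiag (x : R) (n : ℕ) :
    leadingSubmatrix (fun i j => (oddPascal i j : R)) n * leadingSubmatrix (lucasTridiag x) n =
      Matrix.of fun i j : Fin n =>
        (gchoose (2 * (i : ℤ) + 1) ((i : ℤ) - (j : ℤ)) : R) * x ^ 2 +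
          (gchoose (2 * (i : ℤ) + 3) ((i : ℤ) + 1 - (j : ℤ)) : R) := by
  ext i j
  rw [Matrix.mul_apply]
  simp only [leadingSubmatrix_apply, Matrix.of_apply]
  rw [Fin.sum_univ_eq_sum_range (fun k => (oddPascal i k : R) * lucasTridiag x k j)]
  simp only [lucasTridiag, mul_add, sum_add_distrib, mul_ite, mul_zero, sum_ite_eq', mem_range]
  have hlast : (if (j : ℕ) + 1 < n then (oddPascal i (j + 1) : R) * 1 else 0) =
      oddPascal i (j + 1) := by
    split_ifs with h
    · rw [mul_one]
    · rw [oddPascal_of_lt (by omega), Int.cast_zero]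
  rw [if_pos j.isLt, if_pos (by omega), hlast, mul_one, oddPascal_sub_one,
    show 2 * ((i : ℕ) : ℤ) + 3 = 2 * i + 1 + 2 by ring,
    show ((i : ℕ) : ℤ) + 1 - j = i - j + 1 by ring, gchoose_add_two_succ]
  simp only [oddPascal]
  push_cast
  ring_nf

theorem det_lucasTridiag_one (x : R) :
    (leadingSubmatrix (lucasTridiag x) 1).det = x ^ 2 + 3 := by
  simp [lucasTridiag]
  ring

theorem det_lucasTridiag_add_two (x : R) (n : ℕ) :
    (leadingSubmatrix (lucasTridiag x) (n + 2)).det =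
      (x ^ 2 + 2) * (leadingSubmatrix (lucasTridiag x) (n + 1)).det -
        (leadingSubmatrix (lucasTridiag x) n).det := by
  rw [det_leadingSubmatrix_add_two
    (fun i j h => by simp [lucasTridiag, show i ≠ j by omega, show i ≠ j - 1 by omega,
      show i ≠ j + 1 by omega])
    (fun i j h => by simp [lucasTridiag, show i ≠ j by omega, show i ≠ j - 1 by omega,
      show i ≠ j + 1 by omega])]
  simp [lucasTridiag, show n + 1 ≠ n - 1 by omega, show n ≠ n + 1 + 1 by omega]

end Factorization

theorem fibP_zero (x : ℝ) : fibP 0 x = 1 := by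
  simp [fibP]

theorem fibP_one (x : ℝ) : fibP 1 x = x := by
  simp [fibP]

theorem fibP_eq_sum_range {m N : ℕ} (hN : m / 2 + 1 ≤ N) (x : ℝ) :
    fibP m x = ∑ k ∈ range N, ((m - k).choose k : ℝ) * x ^ (m - 2 * k) := by
  refine sum_subset (range_subset_range.mpr hN) fun k _ hk => ?_
  rw [mem_range] at hk
  rw [Nat.choose_eq_zero_of_lt (by omega), Nat.cast_zero, zero_mul]

theorem choose_add_two_sub_succ (m k : ℕ) :
    (m + 2 - (k + 1)).choose (k + 1) = (m - k).choose k + (m - k).choose (k + 1) := by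
  rcases le_or_gt k m with h | h
  · rw [show m + 2 - (k + 1) = m - k + 1 by omega, Nat.choose_succ_succ]
  · rw [show m + 2 - (k + 1) = 0 by omega, show m - k = 0 by omega,
      Nat.choose_eq_zero_of_lt (by omega : 0 < k + 1), Nat.choose_eq_zero_of_lt (by omega : 0 < k)]

-- The truncated exponents disagree only where `C(m - k, k + 1)` vanishes.
theorem fibP_term_add_two (m k : ℕ) (x : ℝ) :
    ((m + 2 - (k + 1)).choose (k + 1) : ℝ) * x ^ (m + 2 - 2 * (k + 1)) =
      ((m - k).choose k : ℝ) * x ^ (m - 2 * k) +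
        x * (((m + 1 - (k + 1)).choose (k + 1) : ℝ) * x ^ (m + 1 - 2 * (k + 1))) := by
  rw [choose_add_two_sub_succ, show m + 2 - 2 * (k + 1) = m - 2 * k by omega,
    show m + 1 - (k + 1) = m - k by omega]
  rcases lt_or_ge m (2 * k + 1) with h | h
  · simp [Nat.choose_eq_zero_of_lt (show m - k < k + 1 by omega)]
  · rw [show m - 2 * k = m + 1 - 2 * (k + 1) + 1 by omega, pow_succ]
    push_cast
    ring

theorem fibP_add_two (m : ℕ) (x : ℝ) : fibP (m + 2) x = x * fibP (m + 1) x + fibP m x := by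
  rw [fibP_eq_sum_range (N := m / 2 + 1 + 1) (by omega),
    fibP_eq_sum_range (m := m + 1) (N := m / 2 + 1 + 1) (by omega), fibP,
    sum_range_succ', sum_range_succ' _ (m / 2 + 1),
    sum_congr rfl fun k _ => fibP_term_add_two m k x, sum_add_distrib, ← mul_sum]
  simp only [Nat.sub_zero, Nat.choose_zero_right, Nat.mul_zero, Nat.cast_one, one_mul]
  ring

theorem div_mul_choose_succ_succ (a k : ℕ) :
    ((a + k + 2 : ℕ) : ℝ) / ((a + 1 : ℕ) : ℝ) * ((a + 1).choose (k + 1) : ℝ) =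
      (a + 1).choose (k + 1) + a.choose k := by
  have h : ((a + 1).choose (k + 1) : ℝ) * (k + 1) = (a + 1 : ℕ) * a.choose k := by
    exact_mod_cast (Nat.add_one_mul_choose_eq a k).symm
  rw [div_mul_eq_mul_div, div_eq_iff (by positivity)]
  push_cast at h ⊢
  linear_combination h

theorem lucasP_add_two_eq_fibP_add_fibP (m : ℕ) (x : ℝ) :
    lucasP (m + 2) x = fibP (m + 2) x + fibP m x := by
  rw [lucasP, if_neg (by omega), fibP, fibP, show (m + 2) / 2 + 1 = m / 2 + 1 + 1 by omega,
    sum_range_succ', sum_range_succ' _ (m / 2 + 1), add_right_comm, ← sum_add_distrib]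
  congr 1
  · refine sum_congr rfl fun k hk => ?_
    rw [mem_range] at hk
    rw [show m + 2 - (k + 1) = m - k + 1 by omega, show m + 2 - 2 * (k + 1) = m - 2 * k by omega,
      show m + 2 = m - k + k + 2 by omega, div_mul_choose_succ_succ]
    ring
  · have : (m : ℝ) + 2 ≠ 0 := by positivity
    simp [this]

theorem lucasP_zero (x : ℝ) : lucasP 0 x = 2 := by
  simp [lucasP]

theorem lucasP_one (x : ℝ) : lucasP 1 x = x := by
  simp [lucasP]

theorem lucasP_add_two (m : ℕ) (x : ℝ) :
    lucasP (m + 2) x = x * lucasP (m + 1) x + lucasP m x := by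
  rcases m with _ | _ | m
  · rw [lucasP_add_two_eq_fibP_add_fibP, fibP_add_two, lucasP_one, lucasP_zero, fibP_one,
      fibP_zero]
    ring
  · rw [lucasP_add_two_eq_fibP_add_fibP, lucasP_add_two_eq_fibP_add_fibP 0, fibP_add_two,
      lucasP_one, fibP_zero, fibP_one]
    ring
  · rw [lucasP_add_two_eq_fibP_add_fibP, lucasP_add_two_eq_fibP_add_fibP (m + 1),
      lucasP_add_two_eq_fibP_add_fibP m, fibP_add_two (m + 2), fibP_add_two m]
    ring

theorem mul_det_lucasTridiag (x : ℝ) (n : ℕ) :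
    x * (leadingSubmatrix (lucasTridiag x) n).det = lucasP (2 * n + 1) x := by
  induction n using Nat.twoStepInduction with
  | zero => simp [lucasP_one]
  | one =>
    rw [det_lucasTridiag_one, lucasP_add_two, lucasP_add_two, lucasP_one, lucasP_zero]
    ring
  | more n ih₀ ih₁ =>
    have h₁ : lucasP (2 * n + 3) x = x * lucasP (2 * n + 2) x + lucasP (2 * n + 1) x :=
      lucasP_add_two _ x
    have h₂ : lucasP (2 * n + 4) x = x * lucasP (2 * n + 3) x + lucasP (2 * n + 2) x :=
      lucasP_add_two _ x
    have h₃ : lucasP (2 * n + 5) x = x * lucasP (2 * n + 4) x + lucasP (2 * n + 3) x :=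
      lucasP_add_two _ x
    rw [show 2 * (n + 1) + 1 = 2 * n + 3 by ring] at ih₁
    rw [show 2 * (n + 2) + 1 = 2 * n + 5 by ring, det_lucasTridiag_add_two]
    linear_combination (x ^ 2 + 2) * ih₁ - ih₀ - h₃ - x * h₂ + h₁

theorem det_eq_lucas_odd_general (n : ℕ) (x : ℝ) :
    x * Matrix.det (Matrix.of fun i j : Fin n =>
        (gchoose (2 * (i : ℤ) + 1) ((i : ℤ) - (j : ℤ)) : ℝ) * x ^ 2 +
        (gchoose (2 * (i : ℤ) + 3) ((i : ℤ) + 1 - (j : ℤ)) : ℝ)) = lucasP (2 * n + 1) x := by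
  rw [← oddPascal_mul_lucasTridiag, Matrix.det_mul, det_oddPascal, one_mul, mul_det_lucasTridiag]

theorem det_eq_lucas_odd (n : ℕ) (hn : 1 ≤ n) (x : ℝ) :
    x * Matrix.det (Matrix.of fun i j : Fin n =>
        (gchoose (2 * (i : ℤ) + 1) ((i : ℤ) - (j : ℤ)) : ℝ) * x ^ 2 +
        (gchoose (2 * (i : ℤ) + 3) ((i : ℤ) + 1 - (j : ℤ)) : ℝ)) = lucasP (2 * n + 1) x :=
  det_eq_lucas_odd_general n x
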